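/- Let 𝔈 be a finite set of safe L-expressions with variables among x_0, …, x_k. Then there exist a finite set A of regular box-formulas, a function f^𝔈 : {x_0, …, x_k} → P(A), and for each E ∈ 𝔈 a propositional variable p_E, such that for every E ∈ 𝔈, in every Kripke frame and under every assignment of points to x_0, …, x_k, the expressions E and KF_{f^𝔈}^{p_E} denote the same subset. -/

import Mathlib

set_option autoImplicit true

universe u v w

/-- Modal formulas over modality indices `Λ` and propositional variables `V`. -/
inductive MF (Λ : Type u) (V : Type v) : Type (max u v)
  | var : V → MF Λ V
  | top : MF Λ V
  | bot : MF Λ V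
  | and : MF Λ V → MF Λ V → MF Λ V
  | or  : MF Λ V → MF Λ V → MF Λ V
  | neg : MF Λ V → MF Λ V
  | imp : MF Λ V → MF Λ V → MF Λ V
  | dia : Λ → MF Λ V → MF Λ V
  | box : Λ → MF Λ V → MF Λ V

namespace MF
variable {Λ : Type u} {V : Type v}

/-- The set of propositional variables occurring in a modal formula. -/
def vars : MF Λ V → Set V
  | var p => {p}
  | top => ∅
  | bot => ∅
  | and a b => vars a ∪ vars b
  | or a b => vars a ∪ vars b
  | neg a => vars a
  | imp a b => vars a ∪ vars b
  | dia _ a => vars a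
  | box _ a => vars a

end MF

/-- Positive modal formulas: built without `¬` and `→`. -/
inductive Positive {Λ : Type u} {V : Type v} : MF Λ V → Prop
  | var (p : V) : Positive (.var p)
  | top : Positive .top
  | bot : Positive .bot
  | and {a b} : Positive a → Positive b → Positive (.and a b)
  | or {a b} : Positive a → Positive b → Positive (.or a b)
  | dia (l) {a} : Positive a → Positive (.dia l a)
  | box (l) {a} : Positive a → Positive (.box l a)

/-- A Kripke frame with accessibility relations indexed by `Λ`. -/
structure Frame (Λ : Type u) where
  W : Type w
  R : Λ → W → W → Prop

/-- Kripke satisfaction `F, x, θ ⊨ φ`. -/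
def sat {Λ : Type u} {V : Type v} (F : Frame Λ) (θ : V → Set F.W) : F.W → MF Λ V → Prop
  | x, .var p => x ∈ θ p
  | _, .top => True
  | _, .bot => False
  | x, .and a b => sat F θ x a ∧ sat F θ x b
  | x, .or a b => sat F θ x a ∨ sat F θ x b
  | x, .neg a => ¬ sat F θ x a
  | x, .imp a b => sat F θ x a → sat F θ x b
  | x, .dia l a => ∃ y, F.R l x y ∧ sat F θ y a
  | x, .box l a => ∀ y, F.R l x y → sat F θ y a

/-- `BoxF φ p S`: `φ` is a box-formula with head `p`, in which the set of variables
occurring not as the head is `S`. -/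
inductive BoxF {Λ : Type u} {V : Type v} : MF Λ V → V → Set V → Prop
  | var (p : V) : BoxF (.var p) p ∅
  | imp {POS ψ p S} : Positive POS → BoxF ψ p S → BoxF (.imp POS ψ) p (MF.vars POS ∪ S)
  | box (l) {ψ p S} : BoxF ψ p S → BoxF (.box l ψ) p S

/-- `RegBF r φ p`: relative to the rank assignment `r`, `φ` is a regular box-formula
with head `p` (of rank `r p`): all variables of the positive antecedents have rank `< r p`. -/
inductive RegBF {Λ : Type u} {V : Type v} (r : V → ℕ) : MF Λ V → V → Prop
  | var (p : V) : RegBF r (.var p) p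
  | imp {POS ψ p} : Positive POS → (∀ q ∈ MF.vars POS, r q < r p) →
      RegBF r ψ p → RegBF r (.imp POS ψ) p
  | box (l) {ψ p} : RegBF r ψ p → RegBF r (.box l ψ) p

/-- The edge relation of the dependency graph of a set `A` of box-formulas:
`p → q` iff `p` occurs (not as the head) in some member of `A` with head `q`. -/
def depEdge {Λ : Type u} {V : Type v} (A : Set (MF Λ V)) (p q : V) : Prop :=
  ∃ φ ∈ A, ∃ S, BoxF φ q S ∧ p ∈ S

/-- A set of box-formulas is regular if its dependency graph has no oriented cycle. -/
def RegularSet {Λ : Type u} {V : Type v} (A : Set (MF Λ V)) : Prop :=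
  ∀ p : V, ¬ Relation.TransGen (depEdge A) p p

/-- `R_λ^{-1}(A) = {u : ∃ v, u R_λ v ∧ v ∈ A}`. -/
def Rinv {Λ : Type u} (F : Frame Λ) (l : Λ) (A : Set F.W) : Set F.W :=
  {u | ∃ v, F.R l u v ∧ v ∈ A}

/-- `R_λ^□(A) = {u : ∀ v, u R_λ v → v ∈ A}`. -/
def RboxOp {Λ : Type u} (F : Frame Λ) (l : Λ) (A : Set F.W) : Set F.W :=
  {u | ∀ v, F.R l u v → v ∈ A}

/-- `R_λ(A) = {u : ∃ v, v R_λ u ∧ v ∈ A}`. -/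
def Rfwd {Λ : Type u} (F : Frame Λ) (l : Λ) (A : Set F.W) : Set F.W :=
  {u | ∃ v, F.R l v u ∧ v ∈ A}

/-- The interpretation of the expression `KP^{POS}` in a frame `F`, the set variables
`P^l_i` being interpreted by `P`.  (Junk value `∅` on non-positive constructors.) -/
def KPsem {Λ : Type u} (F : Frame Λ) (P : ℕ × ℕ → Set F.W) : MF Λ (ℕ × ℕ) → Set F.W
  | .var q => P q
  | .top => Set.univ
  | .bot => ∅
  | .and a b => KPsem F P a ∩ KPsem F P b
  | .or a b => KPsem F P a ∪ KPsem F P b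
  | .dia l a => Rinv F l (KPsem F P a)
  | .box l a => RboxOp F l (KPsem F P a)
  | .neg _ => ∅
  | .imp _ _ => ∅

/-- The interpretation of the expression `KV^φ` in a frame `F`: the set variables `P^l_i`
are interpreted by `P` and the extra variable `#` by the second argument.
(Junk value `∅` on constructors that do not occur in regular box-formulas.) -/
def KVsem {Λ : Type u} (F : Frame Λ) (P : ℕ × ℕ → Set F.W) : MF Λ (ℕ × ℕ) → Set F.W → Set F.W
  | .var _, X => X
  | .imp POS ψ, X => KVsem F P ψ (X ∩ KPsem F P POS)
  | .box l ψ, X => KVsem F P ψ (Rfwd F l X)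
  | _, _ => ∅

/-- The semantic minimal valuation: given points `g j` and sets `f j` of regular
box-formulas to be verified at `g j`, `thetaMinSem F g f k i` is the minimal value of the
variable `p^k_i`; it is defined by recursion on the rank `k` as the union, over all `j` and
all `φ ∈ f j` with head `p^k_i`, of `KV^φ(g j)` computed with the minimal values of the
variables of lower rank. -/
noncomputable def thetaMinSem {Λ : Type u} (F : Frame Λ) {ι : Type w} (g : ι → F.W)
    (f : ι → Set (MF Λ (ℕ × ℕ))) : ℕ → ℕ → Set F.W :=
  fun k => Nat.strongRecOn (motive := fun _ => ℕ → Set F.W) k fun k ih i =>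
    ⋃ (j : ι), ⋃ φ ∈ f j, ⋃ (_ : RegBF Prod.fst φ (k, i)),
      KVsem F (fun q => if h : q.1 < k then ih q.1 h q.2 else ∅) φ {g j}

/-- `L`-expressions: terms of the language `L` with individual variables `x_i` (`i : ℕ`),
constants `⊤, ⊥`, unary `R_λ^{-1}`, `R_λ^□`, `R_λ` and binary `∩`, `∪`. -/
inductive LExp (Λ : Type u) : Type u
  | var : ℕ → LExp Λ
  | top : LExp Λ
  | bot : LExp Λ
  | inter : LExp Λ → LExp Λ → LExp Λ
  | union : LExp Λ → LExp Λ → LExp Λ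
  | rinv : Λ → LExp Λ → LExp Λ
  | rbox : Λ → LExp Λ → LExp Λ
  | rfw : Λ → LExp Λ → LExp Λ

namespace LExp
variable {Λ : Type u}

/-- Denotation of an `L`-expression in a frame `F`, the variable `x_i` denoting the
singleton of the point `g i`. -/
def den (F : Frame Λ) (g : ℕ → F.W) : LExp Λ → Set F.W
  | var i => {g i}
  | top => Set.univ
  | bot => ∅
  | inter a b => den F g a ∩ den F g b
  | union a b => den F g a ∪ den F g b
  | rinv l a => Rinv F l (den F g a)
  | rbox l a => RboxOp F l (den F g a)
  | rfw l a => Rfwd F l (den F g a)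

/-- The set of (indices of) individual variables occurring in an `L`-expression. -/
def evars : LExp Λ → Set ℕ
  | var i => {i}
  | top => ∅
  | bot => ∅
  | inter a b => evars a ∪ evars b
  | union a b => evars a ∪ evars b
  | rinv _ a => evars a
  | rbox _ a => evars a
  | rfw _ a => evars a

end LExp

/-- The subexpression relation on `L`-expressions. -/
inductive Subexp {Λ : Type u} : LExp Λ → LExp Λ → Prop
  | refl (e : LExp Λ) : Subexp e e
  | interL {e a b} : Subexp e a → Subexp e (.inter a b)
  | interR {e a b} : Subexp e b → Subexp e (.inter a b)
  | unionL {e a b} : Subexp e a → Subexp e (.union a b)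
  | unionR {e a b} : Subexp e b → Subexp e (.union a b)
  | rinv (l) {e a} : Subexp e a → Subexp e (.rinv l a)
  | rbox (l) {e a} : Subexp e a → Subexp e (.rbox l a)
  | rfw (l) {e a} : Subexp e a → Subexp e (.rfw l a)

/-- `SafeFor e`: `e` is "safe for" the ambient expression, i.e. `e` is a variable, or
`R_λ(e')` with `e'` safe for it, or an intersection one of whose components is safe for it. -/
inductive SafeFor {Λ : Type u} : LExp Λ → Prop
  | var (i : ℕ) : SafeFor (.var i)
  | rfw (l) {a} : SafeFor a → SafeFor (.rfw l a)
  | interL {a b} : SafeFor a → SafeFor (.inter a b)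
  | interR {a b} : SafeFor b → SafeFor (.inter a b)

/-- An `L`-expression is safe if it is safe for itself and the argument of every
subexpression of the form `R_λ(ψ)` is safe for it. -/
def Safe {Λ : Type u} (e : LExp Λ) : Prop :=
  SafeFor e ∧ ∀ l a, Subexp (.rfw l a) e → SafeFor a

mutual
  /-- The class `K`: the least class of `L`-expressions containing the variables and closed
  under `S ↦ R_λ(S)` and `S ↦ S ∩ E` for `E` a positive combination of members of `K`. -/
  inductive InK {Λ : Type u} : LExp Λ → Prop
    | var (i : ℕ) : InK (.var i)
    | rfw (l : Λ) {S : LExp Λ} : InK S → InK (.rfw l S)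
    | inter {S E : LExp Λ} : InK S → PosOfK E → InK (.inter S E)
  /-- Positive combinations of members of `K`: built from members of `K` using only
  `∩`, `∪`, `R_λ^{-1}`, `R_λ^□`, `⊤`, `⊥`. -/
  inductive PosOfK {Λ : Type u} : LExp Λ → Prop
    | ofK {e : LExp Λ} : InK e → PosOfK e
    | top : PosOfK .top
    | bot : PosOfK .bot
    | inter {a b} : PosOfK a → PosOfK b → PosOfK (.inter a b)
    | union {a b} : PosOfK a → PosOfK b → PosOfK (.union a b)
    | rinv (l) {a} : PosOfK a → PosOfK (.rinv l a)
    | rbox (l) {a} : PosOfK a → PosOfK (.rbox l a)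
end

/-- Quasi-safe `L`-expressions: positive combinations of safe expressions, i.e. built from
safe expressions using only `∩`, `∪`, `R_λ^{-1}`, `R_λ^□`, `⊤`, `⊥`. -/
inductive QuasiSafe {Λ : Type u} : LExp Λ → Prop
  | safe {e : LExp Λ} : Safe e → QuasiSafe e
  | top : QuasiSafe .top
  | bot : QuasiSafe .bot
  | inter {a b} : QuasiSafe a → QuasiSafe b → QuasiSafe (.inter a b)
  | union {a b} : QuasiSafe a → QuasiSafe b → QuasiSafe (.union a b)
  | rinv (l) {a} : QuasiSafe a → QuasiSafe (.rinv l a)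
  | rbox (l) {a} : QuasiSafe a → QuasiSafe (.rbox l a)

/-- `ReplOne i ψ φ φ'`: `φ'` is the result of replacing one occurrence of the variable
`x_i` in `φ` by `ψ`. -/
inductive ReplOne {Λ : Type u} (i : ℕ) (ψ : LExp Λ) : LExp Λ → LExp Λ → Prop
  | here : ReplOne i ψ (.var i) ψ
  | interL {a a' b} : ReplOne i ψ a a' → ReplOne i ψ (.inter a b) (.inter a' b)
  | interR {a b b'} : ReplOne i ψ b b' → ReplOne i ψ (.inter a b) (.inter a b')
  | unionL {a a' b} : ReplOne i ψ a a' → ReplOne i ψ (.union a b) (.union a' b)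
  | unionR {a b b'} : ReplOne i ψ b b' → ReplOne i ψ (.union a b) (.union a b')
  | rinv (l) {a a'} : ReplOne i ψ a a' → ReplOne i ψ (.rinv l a) (.rinv l a')
  | rbox (l) {a a'} : ReplOne i ψ a a' → ReplOne i ψ (.rbox l a) (.rbox l a')
  | rfw (l) {a a'} : ReplOne i ψ a a' → ReplOne i ψ (.rfw l a) (.rfw l a')

/-- A finite union of `L`-expressions (empty union is `⊥`). -/
def unionList {Λ : Type u} : List (LExp Λ) → LExp Λ
  | [] => .bot
  | e :: es => .union e (unionList es)

/-- `UnionOfSafe e`: `e` is a finite union of safe expressions. -/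
inductive UnionOfSafe {Λ : Type u} : LExp Λ → Prop
  | bot : UnionOfSafe .bot
  | safe {e : LExp Λ} : Safe e → UnionOfSafe e
  | union {a b} : UnionOfSafe a → UnionOfSafe b → UnionOfSafe (.union a b)

/-- Syntactic `KP^{POS}`: the `L`-expression obtained from the positive formula `POS` by
replacing each set variable `P^l_i` by the `L`-expression `KF (l, i)`.
(Junk value on non-positive constructors.) -/
def KPsub {Λ : Type u} (KF : ℕ × ℕ → LExp Λ) : MF Λ (ℕ × ℕ) → LExp Λ
  | .var q => KF q
  | .top => .top
  | .bot => .bot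
  | .and a b => .inter (KPsub KF a) (KPsub KF b)
  | .or a b => .union (KPsub KF a) (KPsub KF b)
  | .dia l a => .rinv l (KPsub KF a)
  | .box l a => .rbox l (KPsub KF a)
  | .neg _ => .bot
  | .imp _ _ => .bot

/-- Syntactic `KVF^φ(t)`: the `L`-expression obtained from `KV^φ` by substituting the
`L`-expression `t` for `#` and `KF (l, i)` for each set variable `P^l_i`.
(Junk value on constructors that do not occur in regular box-formulas.) -/
def KVFsyn {Λ : Type u} (KF : ℕ × ℕ → LExp Λ) : MF Λ (ℕ × ℕ) → LExp Λ → LExp Λ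
  | .var _, t => t
  | .imp POS ψ, t => KVFsyn KF ψ (.inter t (KPsub KF POS))
  | .box l ψ, t => KVFsyn KF ψ (.rfw l t)
  | _, _ => .bot

open scoped Classical in
/-- The syntactic minimal valuation `KF_f^{p^k_i}` for variables `x_0, …, x_{n-1}` and
`f` assigning to each variable a finite set of regular box-formulas: defined by recursion on
the rank `k` as the union, over all `j < n` and all `φ ∈ f j` with head `p^k_i`, of
`KVF_f^φ(x_j)`, which is `KV^φ` with `x_j` substituted for `#` and `KF_f^{p^l_m}`
substituted for each `P^l_m` with `l < k`. -/
noncomputable def KFsyn {Λ : Type u} (n : ℕ) (f : ℕ → Finset (MF Λ (ℕ × ℕ))) :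
    ℕ → ℕ → LExp Λ :=
  fun k => Nat.strongRecOn (motive := fun _ => ℕ → LExp Λ) k fun k ih i =>
    unionList (((List.range n).flatMap fun j =>
      ((f j).toList.filter fun φ => decide (RegBF Prod.fst φ (k, i))).map fun φ =>
        KVFsyn (fun q => if h : q.1 < k then ih q.1 h q.2 else LExp.bot) φ (LExp.var j)))

/-- The expressions substituted for the set variables `P^l_m`, `l < k`, in `KVF`:
the syntactic minimal valuations of the lower ranks. -/
noncomputable def lowKF {Λ : Type u} (n : ℕ) (f : ℕ → Finset (MF Λ (ℕ × ℕ))) (k : ℕ) :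
    ℕ × ℕ → LExp Λ :=
  fun q => if q.1 < k then KFsyn n f q.1 q.2 else LExp.bot

/-- `KVFat n f φ j k` is the `L`-expression `KVF_f^φ(x_j)` for `φ` a regular box-formula
of rank `k`. -/
noncomputable def KVFat {Λ : Type u} (n : ℕ) (f : ℕ → Finset (MF Λ (ℕ × ℕ)))
    (φ : MF Λ (ℕ × ℕ)) (j k : ℕ) : LExp Λ :=
  KVFsyn (lowKF n f k) φ (.var j)

/-- A labelled tree-like structure: a set of vertices with relations indexed by `Λ`,
a root, and a label function assigning to every vertex a set of labels from `α`. -/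
structure LabTree (Λ : Type u) (α : Type v) where
  V : Type
  R : Λ → V → V → Prop
  root : V
  label : V → Set α

/-- Derivation trees witnessing that a formula is built from base formulas using only
`∧` and `◇_λ`. -/
inductive BuiltT (Λ : Type u) (V : Type v) : Type (max u v)
  | base : MF Λ V → BuiltT Λ V
  | and : BuiltT Λ V → BuiltT Λ V → BuiltT Λ V
  | dia : Λ → BuiltT Λ V → BuiltT Λ V

/-- The modal formula described by a derivation tree. -/
def BuiltT.formula {Λ : Type u} {V : Type v} : BuiltT Λ V → MF Λ V
  | base φ => φ
  | and a b => .and a.formula b.formula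
  | dia l a => .dia l a.formula

/-- The derivation tree uses only base formulas from `A`. -/
def BuiltT.Ok {Λ : Type u} {V : Type v} (A : Set (MF Λ V)) : BuiltT Λ V → Prop
  | base φ => φ ∈ A
  | and a b => a.Ok A ∧ b.Ok A
  | dia _ a => a.Ok A

/-- Helper for gluing two labelled trees at their roots: the relation on the disjoint sum,
with the edges out of the second root re-attached to the first root. -/
def glueR {Λ : Type u} {W₁ W₂ : Type} (R₁ : Λ → W₁ → W₁ → Prop) (R₂ : Λ → W₂ → W₂ → Prop)
    (r₁ : W₁) (r₂ : W₂) (l : Λ) : W₁ ⊕ W₂ → W₁ ⊕ W₂ → Prop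
  | Sum.inl a, Sum.inl b => R₁ l a b
  | Sum.inr a, Sum.inr b => R₂ l a b
  | Sum.inl a, Sum.inr b => a = r₁ ∧ R₂ l r₂ b
  | Sum.inr _, Sum.inl _ => False

open Classical in
/-- Helper for gluing two labelled trees at their roots: the label function, the glued root
receiving the union of the two root labels. -/
noncomputable def glueLab {α : Type w} {W₁ W₂ : Type} (L₁ : W₁ → Set α) (L₂ : W₂ → Set α)
    (r₁ : W₁) (r₂ : W₂) : W₁ ⊕ W₂ → Set α
  | Sum.inl a => if a = r₁ then L₁ r₁ ∪ L₂ r₂ else L₁ a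
  | Sum.inr b => L₂ b

/-- Helper for prefixing a labelled tree with a new root: the relation on `Option W`,
with an `R_{l₀}`-edge from the new root `none` to the old root `r`. -/
def prefR {Λ : Type u} {W : Type} (R : Λ → W → W → Prop) (l₀ : Λ) (r : W) (l : Λ) :
    Option W → Option W → Prop
  | none, some w => l = l₀ ∧ w = r
  | some a, some b => R l a b
  | _, _ => False

/-- Helper for prefixing a labelled tree with a new root: the label function, the new root
getting the empty label. -/
def prefLab {α : Type w} {W : Type} (L : W → Set α) : Option W → Set α
  | none => ∅
  | some a => L a

/-- The reduced syntactical tree of a formula built from base formulas using `∧` and `◇_λ`: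
a single root labelled `{a}` for a base formula `a`; for a conjunction, the two trees
with their roots identified (labels united); for `◇_λ ψ`, a new root with empty label and an
`R_λ`-edge to the root of the tree of `ψ`. -/
noncomputable def TreeOf {Λ : Type u} {V : Type v} : BuiltT Λ V → LabTree Λ (MF Λ V)
  | .base φ =>
      { V := Unit, R := fun _ _ _ => False, root := (), label := fun _ => {φ} }
  | .and b₁ b₂ =>
      let T₁ := TreeOf b₁
      let T₂ := TreeOf b₂
      { V := {v : T₁.V ⊕ T₂.V // v ≠ Sum.inr T₂.root},
        R := fun l u v => glueR T₁.R T₂.R T₁.root T₂.root l u.1 v.1,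
        root := ⟨Sum.inl T₁.root, by exact Sum.inl_ne_inr⟩,
        label := fun v => glueLab T₁.label T₂.label T₁.root T₂.root v.1 }
  | .dia l b =>
      let T := TreeOf b
      { V := Option T.V,
        R := fun l' u v => prefR T.R l T.root l' u v,
        root := none,
        label := fun v => prefLab T.label v }

/-- Restrictedly positive first-order formulas over the frame language: built from atoms
`y ∈ E` (`E` an `L`-expression) using `∧`, `∨` and the restricted quantifiers
`(∀ y ◁_λ x)` and `(∃ y ◁_λ x)`. -/
inductive KrF (Λ : Type u) : Type u
  | atom : ℕ → LExp Λ → KrF Λ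
  | and : KrF Λ → KrF Λ → KrF Λ
  | or : KrF Λ → KrF Λ → KrF Λ
  | all : ℕ → Λ → ℕ → KrF Λ → KrF Λ
  | ex : ℕ → Λ → ℕ → KrF Λ → KrF Λ

namespace KrF
variable {Λ : Type u}

/-- Truth of a restrictedly positive formula in a frame under an assignment `g` of points to
individual variables; the atom `y ∈ E` is read via the `#`-translation, i.e. as membership
of `g y` in the denotation of `E`. -/
def holds (F : Frame Λ) : (ℕ → F.W) → KrF Λ → Prop
  | g, atom y E => g y ∈ E.den F g
  | g, and a b => holds F g a ∧ holds F g b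
  | g, or a b => holds F g a ∨ holds F g b
  | g, all y l x β => ∀ w, F.R l (g x) w → holds F (Function.update g y w) β
  | g, ex y l x β => ∃ w, F.R l (g x) w ∧ holds F (Function.update g y w) β

/-- Free variables. -/
def fv : KrF Λ → Set ℕ
  | atom y E => insert y E.evars
  | and a b => fv a ∪ fv b
  | or a b => fv a ∪ fv b
  | all y _ x β => insert x (fv β \ {y})
  | ex y _ x β => insert x (fv β \ {y})

/-- Bound variables. -/
def bv : KrF Λ → Set ℕ
  | atom _ _ => ∅
  | and a b => bv a ∪ bv b
  | or a b => bv a ∪ bv b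
  | all y _ _ β => insert y (bv β)
  | ex y _ _ β => insert y (bv β)

/-- No two distinct quantifier occurrences bind the same variable. -/
def CleanBound : KrF Λ → Prop
  | atom _ _ => True
  | and a b => CleanBound a ∧ CleanBound b ∧ bv a ∩ bv b = ∅
  | or a b => CleanBound a ∧ CleanBound b ∧ bv a ∩ bv b = ∅
  | all y _ _ β => CleanBound β ∧ y ∉ bv β
  | ex y _ _ β => CleanBound β ∧ y ∉ bv β

/-- Clean formulas: no variable occurs both free and bound, and no two distinct quantifier
occurrences bind the same variable. -/
def Clean (φ : KrF Λ) : Prop := fv φ ∩ bv φ = ∅ ∧ CleanBound φ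

/-- All the `L`-expressions occurring in atoms of the formula satisfy `P`. -/
def AtomsAll (P : LExp Λ → Prop) : KrF Λ → Prop
  | atom _ E => P E
  | and a b => AtomsAll P a ∧ AtomsAll P b
  | or a b => AtomsAll P a ∧ AtomsAll P b
  | all _ _ _ β => AtomsAll P β
  | ex _ _ _ β => AtomsAll P β

/-- Quantifier-free formulas (built from atoms using only `∧` and `∨`). -/
def QFree : KrF Λ → Prop
  | atom _ _ => True
  | and a b => QFree a ∧ QFree b
  | or a b => QFree a ∧ QFree b
  | all _ _ _ _ => False
  | ex _ _ _ _ => False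

/-- Formulas built from atoms using only `∧`, `∨` and restricted universal quantification
(no existential quantifier). -/
def NoEx : KrF Λ → Prop
  | atom _ _ => True
  | and a b => NoEx a ∧ NoEx b
  | or a b => NoEx a ∧ NoEx b
  | all _ _ _ β => NoEx β
  | ex _ _ _ _ => False

/-- `GKok U e φ`: every variable occurring in an `L`-expression of an atom of `φ` is
inherently universal. Here `U` is the set of variables that are inherently universal so far
(initially the free variables) and `e` records whether we are within the scope of an
existential quantifier. -/
def GKok : Set ℕ → Bool → KrF Λ → Prop
  | U, _, atom _ E => E.evars ⊆ U
  | U, e, and a b => GKok U e a ∧ GKok U e b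
  | U, e, or a b => GKok U e a ∧ GKok U e b
  | U, false, all y _ _ β => GKok (insert y U) false β
  | U, true, all _ _ _ β => GKok U true β
  | U, _, ex _ _ _ β => GKok U true β

end KrF

/-- A generalized Kracht formula with free variables: clean, restrictedly positive with safe
atoms, and in every atom `y ∈ E` all variables of `E` are inherently universal. -/
def IsGenKrachtFV {Λ : Type u} (α : KrF Λ) : Prop :=
  α.Clean ∧ α.AtomsAll Safe ∧ α.GKok α.fv false

/-- A generalized Kracht formula: a generalized Kracht formula with free variables whose
only free variable is `x0`. -/
def IsGenKracht {Λ : Type u} (α : KrF Λ) (x0 : ℕ) : Prop :=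
  IsGenKrachtFV α ∧ α.fv = {x0}

/-- Generalized Sahlqvist antecedents: built from regular box-formulas and negative
formulas using only `∧`, `∨`, `◇_λ`. -/
inductive GSAnt {Λ : Type u} : MF Λ (ℕ × ℕ) → Prop
  | reg {φ p} : RegBF Prod.fst φ p → GSAnt φ
  | neg {φ} : Positive φ → GSAnt (.neg φ)
  | and {a b} : GSAnt a → GSAnt b → GSAnt (.and a b)
  | or {a b} : GSAnt a → GSAnt b → GSAnt (.or a b)
  | dia (l) {a} : GSAnt a → GSAnt (.dia l a)

/-- Generalized Sahlqvist formulas: built from generalized Sahlqvist implications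
`GSA → ⊥` by applying boxes and conjunctions, and disjunctions only to formulas without
common propositional variables. -/
inductive GSF {Λ : Type u} : MF Λ (ℕ × ℕ) → Prop
  | impl {a} : GSAnt a → GSF (.imp a .bot)
  | box (l) {a} : GSF a → GSF (.box l a)
  | and {a b} : GSF a → GSF b → GSF (.and a b)
  | or {a b} : GSF a → GSF b → MF.vars a ∩ MF.vars b = ∅ → GSF (.or a b)

open Classical in
/-- The modal translation `E^T` of a quasi-safe expression: safe subexpressions are
replaced by their associated propositional variables `p_E`, and `∩, ∪, R^{-1}_λ, R^□_λ`
become `∧, ∨, ◇_λ, □_λ`. -/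
noncomputable def Etrans {Λ : Type u} (pE : LExp Λ → ℕ × ℕ) : LExp Λ → MF Λ (ℕ × ℕ)
  | .var i => .var (pE (.var i))
  | .top => .top
  | .bot => .bot
  | .inter a b =>
      if Safe (LExp.inter a b) then .var (pE (.inter a b))
      else .and (Etrans pE a) (Etrans pE b)
  | .union a b =>
      if Safe (LExp.union a b) then .var (pE (.union a b))
      else .or (Etrans pE a) (Etrans pE b)
  | .rinv l a =>
      if Safe (LExp.rinv l a) then .var (pE (.rinv l a)) else .dia l (Etrans pE a)
  | .rbox l a =>
      if Safe (LExp.rbox l a) then .var (pE (.rbox l a)) else .box l (Etrans pE a)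
  | .rfw l a => if Safe (LExp.rfw l a) then .var (pE (.rfw l a)) else .bot

/-- A finite disjunction of modal formulas (empty disjunction is `⊥`). -/
def orList {Λ : Type u} {V : Type v} : List (MF Λ V) → MF Λ V
  | [] => .bot
  | a :: as => .or a (orList as)
/-!
A safe expression `S` is built from a base variable `x_j` by applying operators `R_λ` and
intersecting with side expressions. Read from `x_j` outwards, this spine is `KV^φ(x_j)` for a
box-formula `φ_S` with head `p_S`: each `R_λ` becomes a box and each intersection with a side
expression `E` an antecedent `POS_E → ·`, where `POS_E` is `E` read as a positive formula in
the variables `p_T` of its subexpressions `T` of the form `x_i` or `R_λ(T')`; these are safe,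
because the arguments of `R_λ` in a safe expression are. Giving `p_T` the size of `T` as rank
makes `φ_S` regular. With `f(x_j)` the set of the `φ_S` for the safe subexpressions `S` with
base `x_j`, induction on size shows that `KF_f^{p_S}` denotes the same set as `S`.
-/

section
open scoped Classical

namespace LExp
variable {Λ : Type u}

def size : LExp Λ → ℕ
  | var _ => 1
  | top => 1
  | bot => 1
  | inter a b => size a + size b + 1
  | union a b => size a + size b + 1
  | rinv _ a => size a + 1
  | rbox _ a => size a + 1
  | rfw _ a => size a + 1

def subexps : LExp Λ → List (LExp Λ)
  | var i => [var i]
  | top => [top]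
  | bot => [bot]
  | inter a b => inter a b :: (subexps a ++ subexps b)
  | union a b => union a b :: (subexps a ++ subexps b)
  | rinv l a => rinv l a :: subexps a
  | rbox l a => rbox l a :: subexps a
  | rfw l a => rfw l a :: subexps a

noncomputable def baseVar : LExp Λ → ℕ
  | var i => i
  | rfw _ a => baseVar a
  | inter a b => if SafeFor a then baseVar a else baseVar b
  | _ => 0

/-- `Safe e` is `SafeFor e ∧ e.FwdArgsSafe`; only the second half passes to subexpressions. -/
def FwdArgsSafe (e : LExp Λ) : Prop :=
  ∀ l a, Subexp (rfw l a) e → SafeFor a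

def propVar (idx : LExp Λ → ℕ) (e : LExp Λ) : ℕ × ℕ :=
  (e.size, idx e)

def posFormula (idx : LExp Λ → ℕ) : LExp Λ → MF Λ (ℕ × ℕ)
  | var i => .var (propVar idx (var i))
  | top => .top
  | bot => .bot
  | inter a b => .and (posFormula idx a) (posFormula idx b)
  | union a b => .or (posFormula idx a) (posFormula idx b)
  | rinv l a => .dia l (posFormula idx a)
  | rbox l a => .box l (posFormula idx a)
  | rfw l a => .var (propVar idx (rfw l a))

/-- `e.boxFormula idx φ` satisfies `KV^{e.boxFormula idx φ}(x_{e.baseVar}) = KV^φ(e)`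
(see `den_KVFsyn_boxFormula`). -/
noncomputable def boxFormula (idx : LExp Λ → ℕ) : LExp Λ → MF Λ (ℕ × ℕ) → MF Λ (ℕ × ℕ)
  | rfw l a, φ => boxFormula idx a (.box l φ)
  | inter a b, φ =>
      if SafeFor a then boxFormula idx a (.imp (posFormula idx b) φ)
      else boxFormula idx b (.imp (posFormula idx a) φ)
  | _, φ => φ

noncomputable def regFormula (idx : LExp Λ → ℕ) (e : LExp Λ) : MF Λ (ℕ × ℕ) :=
  e.boxFormula idx (.var (e.propVar idx))

end LExp

open LExp

variable {Λ : Type u}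

namespace Subexp

theorem trans {a b c : LExp Λ} (hab : Subexp a b) (hbc : Subexp b c) : Subexp a c := by
  induction hbc with
  | refl => exact hab
  | interL _ ih => exact .interL (ih hab)
  | interR _ ih => exact .interR (ih hab)
  | unionL _ ih => exact .unionL (ih hab)
  | unionR _ ih => exact .unionR (ih hab)
  | rinv l _ ih => exact .rinv l (ih hab)
  | rbox l _ ih => exact .rbox l (ih hab)
  | rfw l _ ih => exact .rfw l (ih hab)

theorem size_le {s e : LExp Λ} (h : Subexp s e) : s.size ≤ e.size := by
  induction h <;> (try simp only [size]) <;> omega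

theorem evars_subset {s e : LExp Λ} (h : Subexp s e) : s.evars ⊆ e.evars := by
  induction h with
  | refl => exact subset_rfl
  | interL _ ih | unionL _ ih => exact ih.trans Set.subset_union_left
  | interR _ ih | unionR _ ih => exact ih.trans Set.subset_union_right
  | rinv _ _ ih | rbox _ _ ih | rfw _ _ ih => exact ih

end Subexp

theorem LExp.mem_subexps_iff {s e : LExp Λ} : s ∈ e.subexps ↔ Subexp s e := by
  constructor
  · intro h
    induction e <;> simp only [subexps, List.mem_cons, List.mem_append, List.mem_nil_iff,
      or_false] at h <;> (try casesm* _ ∨ _) <;> subst_vars <;>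
      solve_by_elim [Subexp.refl, Subexp.interL, Subexp.interR, Subexp.unionL, Subexp.unionR,
        Subexp.rinv, Subexp.rbox, Subexp.rfw]
  · intro h
    induction h with
    | refl e => cases e <;> simp [subexps]
    | _ => simp_all [subexps]

theorem SafeFor.baseVar_mem_evars {e : LExp Λ} (h : SafeFor e) : e.baseVar ∈ e.evars := by
  induction e with
  | var i => simp [baseVar, evars]
  | inter a b iha ihb =>
    simp only [baseVar, evars]
    split_ifs with ha
    · exact Or.inl (iha ha)
    · cases h with
      | interL h => exact absurd h ha
      | interR h => exact Or.inr (ihb h)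
  | rfw l a ih => cases h with | rfw _ h => exact ih h
  | _ => cases h

theorem LExp.FwdArgsSafe.of_subexp {s e : LExp Λ} (h : e.FwdArgsSafe) (hs : Subexp s e) :
    s.FwdArgsSafe :=
  fun l a ha => h l a (ha.trans hs)

theorem RegBF.head_unique {V : Type v} {r : V → ℕ} {φ : MF Λ V} {p q : V}
    (hp : RegBF r φ p) (hq : RegBF r φ q) : p = q := by
  induction hp generalizing q with
  | var => cases hq; rfl
  | imp _ _ _ ih => cases hq with | imp _ _ h => exact ih h
  | box _ _ ih => cases hq with | box _ h => exact ih h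

section Regularity
variable (idx : LExp Λ → ℕ)

theorem LExp.posFormula_positive (e : LExp Λ) : Positive (e.posFormula idx) := by
  induction e with
  | inter _ _ iha ihb => exact .and iha ihb
  | union _ _ iha ihb => exact .or iha ihb
  | rinv l _ ih => exact .dia l ih
  | rbox l _ ih => exact .box l ih
  | _ => first | exact .var _ | exact .top | exact .bot

theorem LExp.fst_le_size_of_mem_vars_posFormula (e : LExp Λ) :
    ∀ q ∈ (e.posFormula idx).vars, q.1 ≤ e.size := by
  induction e <;> simp only [posFormula, MF.vars, Set.mem_singleton_iff, Set.mem_union,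
    propVar, size] <;> grind

theorem LExp.regBF_boxFormula (e : LExp Λ) {φ : MF Λ (ℕ × ℕ)} {p : ℕ × ℕ}
    (hφ : RegBF Prod.fst φ p) (he : e.size ≤ p.1) :
    RegBF Prod.fst (e.boxFormula idx φ) p := by
  induction e generalizing φ with
  | inter a b iha ihb =>
    simp only [size] at he
    have antecedent (c : LExp Λ) (hc : c.size < p.1) :
        RegBF Prod.fst (.imp (c.posFormula idx) φ) p :=
      .imp (c.posFormula_positive idx)
        (fun q hq => (c.fst_le_size_of_mem_vars_posFormula idx q hq).trans_lt hc) hφ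
    simp only [boxFormula]
    split_ifs
    · exact iha (antecedent b (by omega)) (by omega)
    · exact ihb (antecedent a (by omega)) (by omega)
  | rfw l a ih =>
    simp only [size] at he
    exact ih (.box l hφ) (by omega)
  | _ => exact hφ

theorem LExp.regBF_regFormula (e : LExp Λ) :
    RegBF Prod.fst (e.regFormula idx) (e.propVar idx) :=
  e.regBF_boxFormula idx (.var _) le_rfl

end Regularity

section Denotation
variable {F : Frame Λ} {g : ℕ → F.W} (KF : ℕ × ℕ → LExp Λ) (idx : LExp Λ → ℕ)

theorem den_KVFsyn_congr (φ : MF Λ (ℕ × ℕ)) {t t' : LExp Λ} (h : t.den F g = t'.den F g) :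
    (KVFsyn KF φ t).den F g = (KVFsyn KF φ t').den F g := by
  induction φ generalizing t t' with
  | var => simpa [KVFsyn] using h
  | imp _ _ _ ih => exact ih (by simp only [den, h])
  | box _ _ ih => exact ih (by simp only [den, h])
  | _ => rfl

theorem den_KPsub_posFormula {e : LExp Λ} (hr : e.FwdArgsSafe)
    (hKF : ∀ T, Subexp T e → SafeFor T → (KF (T.propVar idx)).den F g = T.den F g) :
    (KPsub KF (e.posFormula idx)).den F g = e.den F g := by
  induction e with
  | var i => exact hKF _ (.refl _) (.var i)
  | top | bot => rfl
  | inter a b iha ihb =>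
    simp only [posFormula, KPsub, den]
    rw [iha (hr.of_subexp (.interL (.refl a))) (fun T hT => hKF T (.interL hT)),
      ihb (hr.of_subexp (.interR (.refl b))) (fun T hT => hKF T (.interR hT))]
  | union a b iha ihb =>
    simp only [posFormula, KPsub, den]
    rw [iha (hr.of_subexp (.unionL (.refl a))) (fun T hT => hKF T (.unionL hT)),
      ihb (hr.of_subexp (.unionR (.refl b))) (fun T hT => hKF T (.unionR hT))]
  | rinv l a ih =>
    simp only [posFormula, KPsub, den]
    rw [ih (hr.of_subexp (.rinv l (.refl a))) (fun T hT => hKF T (.rinv l hT))]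
  | rbox l a ih =>
    simp only [posFormula, KPsub, den]
    rw [ih (hr.of_subexp (.rbox l (.refl a))) (fun T hT => hKF T (.rbox l hT))]
  | rfw l a _ => exact hKF _ (.refl _) (.rfw l (hr l a (.refl _)))

theorem den_KVFsyn_boxFormula {e : LExp Λ} (he : SafeFor e) (hr : e.FwdArgsSafe)
    (hKF : ∀ T, Subexp T e → SafeFor T → T.size < e.size →
      (KF (T.propVar idx)).den F g = T.den F g) (φ : MF Λ (ℕ × ℕ)) :
    (KVFsyn KF (e.boxFormula idx φ) (.var e.baseVar)).den F g = (KVFsyn KF φ e).den F g := by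
  induction e generalizing φ with
  | var => rfl
  | inter a b iha ihb =>
    have hside (c : LExp Λ) (hc : Subexp c (a.inter b)) (hlt : c.size < (a.inter b).size) :
        (KPsub KF (c.posFormula idx)).den F g = c.den F g :=
      den_KPsub_posFormula KF idx (hr.of_subexp hc) fun T hT hTs =>
        hKF T (hT.trans hc) hTs (hT.size_le.trans_lt hlt)
    simp only [boxFormula, baseVar]
    split_ifs with ha
    · rw [iha ha (hr.of_subexp (.interL (.refl a)))
        (fun T hT hTs hlt => hKF T (.interL hT) hTs (by simp only [size]; omega))]
      exact den_KVFsyn_congr KF φ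
        (by simp only [den, hside b (.interR (.refl b)) (by simp only [size]; omega)])
    · have hb : SafeFor b := by
        cases he with
        | interL h => exact absurd h ha
        | interR h => exact h
      rw [ihb hb (hr.of_subexp (.interR (.refl b)))
        (fun T hT hTs hlt => hKF T (.interR hT) hTs (by simp only [size]; omega))]
      exact den_KVFsyn_congr KF φ
        (by simp only [den, hside a (.interL (.refl a)) (by simp only [size]; omega),
          Set.inter_comm])
  | rfw l a ih =>
    cases he with | rfw _ ha =>
    exact ih ha (hr.of_subexp (.rfw l (.refl a)))
      (fun T hT hTs hlt => hKF T (.rfw l hT) hTs (by simp only [size]; omega)) (.box l φ)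
  | _ => cases he

end Denotation

theorem mem_den_unionList {F : Frame Λ} {g : ℕ → F.W} {x : F.W} (es : List (LExp Λ)) :
    x ∈ (unionList es).den F g ↔ ∃ e ∈ es, x ∈ e.den F g := by
  induction es with
  | nil => simp [unionList, den]
  | cons e es ih => simp [unionList, den, ih]

theorem mem_den_KFsyn {F : Frame Λ} {g : ℕ → F.W} {x : F.W} {n : ℕ}
    {f : ℕ → Finset (MF Λ (ℕ × ℕ))} {r i : ℕ} :
    x ∈ (KFsyn n f r i).den F g ↔
      ∃ j < n, ∃ φ ∈ f j, RegBF Prod.fst φ (r, i) ∧ x ∈ (KVFat n f φ j r).den F g := by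
  have hunfold : KFsyn n f r i = unionList ((List.range n).flatMap fun j =>
      ((f j).toList.filter fun φ => RegBF Prod.fst φ (r, i)).map fun φ => KVFat n f φ j r) := by
    rw [KFsyn, Nat.strongRecOn_eq]
    simp only [dite_eq_ite]
    rfl
  simp [hunfold, mem_den_unionList, and_assoc]

section Construction
variable (L : List (LExp Λ))

noncomputable def safeBoxFormulas (j : ℕ) : Finset (MF Λ (ℕ × ℕ)) :=
  ((L.filter fun S => SafeFor S ∧ S.baseVar = j).map (regFormula L.idxOf)).toFinset

variable {L}

theorem mem_safeBoxFormulas {j : ℕ} {φ : MF Λ (ℕ × ℕ)} :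
    φ ∈ safeBoxFormulas L j ↔
      ∃ S ∈ L, SafeFor S ∧ S.baseVar = j ∧ S.regFormula L.idxOf = φ := by
  simp [safeBoxFormulas, and_assoc]

theorem den_eq_den_KFsyn_safeBoxFormulas {n : ℕ} (hargs : ∀ S ∈ L, S.FwdArgsSafe)
    (hclosed : ∀ S ∈ L, ∀ T, Subexp T S → T ∈ L)
    (hbase : ∀ S ∈ L, SafeFor S → S.baseVar < n) {S : LExp Λ} (hS : S ∈ L) (hsafe : SafeFor S)
    (F : Frame Λ) (g : ℕ → F.W) :
    S.den F g = (KFsyn n (safeBoxFormulas L) S.size (L.idxOf S)).den F g := by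
  induction hsize : S.size using Nat.strong_induction_on generalizing S with
  | _ N ih =>
    subst hsize
    have hlow : ∀ T, Subexp T S → SafeFor T → T.size < S.size →
        (lowKF n (safeBoxFormulas L) S.size (T.propVar L.idxOf)).den F g = T.den F g := by
      intro T hT hTsafe hlt
      rw [lowKF, propVar, if_pos hlt]
      exact (ih _ hlt (hclosed S hS T hT) hTsafe rfl).symm
    have hspine :
        (KVFat n (safeBoxFormulas L) (S.regFormula L.idxOf) S.baseVar S.size).den F g = S.den F g :=
      den_KVFsyn_boxFormula _ _ hsafe (hargs S hS) hlow _
    ext x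
    rw [mem_den_KFsyn]
    constructor
    · intro hx
      exact ⟨S.baseVar, hbase S hS hsafe, _, mem_safeBoxFormulas.2 ⟨S, hS, hsafe, rfl, rfl⟩,
        S.regBF_regFormula _, hspine ▸ hx⟩
    · rintro ⟨j, -, φ, hφ, hreg, hx⟩
      obtain ⟨T, hT, hTsafe, rfl, rfl⟩ := mem_safeBoxFormulas.1 hφ
      have hTS : T.propVar L.idxOf = S.propVar L.idxOf :=
        (T.regBF_regFormula _).head_unique hreg
      obtain rfl : T = S := (List.idxOf_inj hT).1 (congrArg Prod.snd hTS)
      rwa [hspine] at hx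

end Construction

end

/-- for every finite set `𝔈` of safe `L`-expressions with variables among
`x_0, …, x_k` there are a function `f^𝔈` assigning to each of these variables a finite set
of regular box-formulas and, for each `E ∈ 𝔈`, a propositional variable `p_E`, such that
`E` and `KF_{f^𝔈}^{p_E}` denote the same subset in every Kripke frame under every
assignment of points. -/
theorem statement10 {Λ : Type u} (k : ℕ) (𝔈 : Finset (LExp Λ))
    (hsafe : ∀ E ∈ 𝔈, Safe E) (hvars : ∀ E ∈ 𝔈, E.evars ⊆ {i : ℕ | i ≤ k}) :
    ∃ f : ℕ → Finset (MF Λ (ℕ × ℕ)),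
      (∀ j, ∀ ψ ∈ f j, ∃ p : ℕ × ℕ, RegBF Prod.fst ψ p) ∧
      (∀ j, k + 1 ≤ j → f j = ∅) ∧
      ∃ pE : LExp Λ → ℕ × ℕ, ∀ E ∈ 𝔈, ∀ (F : Frame Λ) (g : ℕ → F.W),
        E.den F g = (KFsyn (k + 1) f (pE E).1 (pE E).2).den F g := by
  classical
  set L := 𝔈.toList.flatMap LExp.subexps
  have mem_L (S : LExp Λ) : S ∈ L ↔ ∃ E ∈ 𝔈, Subexp S E := by
    simp [L, LExp.mem_subexps_iff]
  have hargs : ∀ S ∈ L, S.FwdArgsSafe := fun S hS ↦ by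
    obtain ⟨E, hE, hSE⟩ := (mem_L S).1 hS
    exact LExp.FwdArgsSafe.of_subexp (hsafe E hE).2 hSE
  have hclosed : ∀ S ∈ L, ∀ T, Subexp T S → T ∈ L := fun S hS T hT ↦ by
    obtain ⟨E, hE, hSE⟩ := (mem_L S).1 hS
    exact (mem_L T).2 ⟨E, hE, hT.trans hSE⟩
  have hbase : ∀ S ∈ L, SafeFor S → S.baseVar < k + 1 := fun S hS hS' ↦ by
    obtain ⟨E, hE, hSE⟩ := (mem_L S).1 hS
    exact Nat.lt_succ_of_le (hvars E hE (hSE.evars_subset hS'.baseVar_mem_evars))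
  refine ⟨safeBoxFormulas L, fun j ψ hψ ↦ ?_, fun j hj ↦ ?_, LExp.propVar L.idxOf,
    fun E hE ↦ ?_⟩
  · obtain ⟨S, -, -, -, rfl⟩ := mem_safeBoxFormulas.1 hψ
    exact ⟨_, S.regBF_regFormula _⟩
  · refine Finset.eq_empty_of_forall_notMem fun ψ hψ ↦ ?_
    obtain ⟨S, hS, hS', rfl, -⟩ := mem_safeBoxFormulas.1 hψ
    exact absurd (hbase S hS hS') (by omega)
  · exact den_eq_den_KFsyn_safeBoxFormulas hargs hclosed hbase
      ((mem_L E).2 ⟨E, hE, .refl E⟩) (hsafe E hE).1
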